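/- If C_φ is an isometry of the harmonic Bloch space HB(1) and φ fixes the origin but is not a rotation, then for the disk automorphism φ_a(z)=(a-z)/(1-āz) one has sup_{z∈D} τ_φ(z)(1 - |φ_a(φ(z))|²) = 1 for every a ∈ D, where τ_φ(z) = (1-|z|²)|φ'(z)|/(1-|φ(z)|²). -/

import Mathlib

open Complex Metric Set Filter
noncomputable section

/-- The open unit disk in `ℂ`. -/
def unitDisk : Set ℂ := Metric.ball (0 : ℂ) 1

/-- The set of values `(1-|z|²)^α (|f_z(z)| + |f_z̄(z)|)` for `z` in the unit disk, where the
harmonic function is `f = h + conj g` with `h, g` analytic, so `f_z = h'` and `f_z̄ = conj g'`. -/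
def hbSet (α : ℝ) (h g : ℂ → ℂ) : Set ℝ :=
  (fun z => (1 - ‖z‖ ^ 2) ^ α *
    (‖deriv h z‖ + ‖deriv g z‖)) '' unitDisk

/-- The harmonic α-Bloch seminorm `‖f‖_{HB(α)}` of `f = h + conj g`. -/
def hbSemi (α : ℝ) (h g : ℂ → ℂ) : ℝ := sSup (hbSet α h g)

/-- The harmonic α-Bloch norm `|||f|||_{HB(α)} = |f(0)| + ‖f‖_{HB(α)}` of `f = h + conj g`. -/
def hbNorm (α : ℝ) (h g : ℂ → ℂ) : ℝ :=
  ‖h 0 + (starRingEnd ℂ) (g 0)‖ + hbSemi α h g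

/-- An analytic self-map of the unit disk. -/
def IsSelfMap (φ : ℂ → ℂ) : Prop :=
  DifferentiableOn ℂ φ unitDisk ∧ MapsTo φ unitDisk unitDisk

/-- `f = h + conj g` is a harmonic α-Bloch function: `h, g` analytic on the disk and the
Bloch quantity is bounded. -/
def IsHB (α : ℝ) (h g : ℂ → ℂ) : Prop :=
  DifferentiableOn ℂ h unitDisk ∧ DifferentiableOn ℂ g unitDisk ∧ BddAbove (hbSet α h g)

/-- The composition operator `C_φ` is an isometry on `HB(α)`: `|||f∘φ||| = |||f|||` for every
harmonic α-Bloch function `f = h + conj g` (note `f ∘ φ = h∘φ + conj (g∘φ)`). -/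
def IsIsometryOn (α : ℝ) (φ : ℂ → ℂ) : Prop :=
  ∀ h g : ℂ → ℂ, IsHB α h g → hbNorm α (h ∘ φ) (g ∘ φ) = hbNorm α h g

/-- `φ` is a rotation of the unit disk. -/
def IsRotation (φ : ℂ → ℂ) : Prop :=
  ∃ lam : ℂ, ‖lam‖ = 1 ∧ ∀ z ∈ unitDisk, φ z = lam * z

/-- `τ_φ(z) = (1-|z|²)|φ'(z)| / (1-|φ(z)|²)`. -/
def tauPhi (φ : ℂ → ℂ) (z : ℂ) : ℝ :=
  (1 - ‖z‖ ^ 2) * ‖deriv φ z‖ / (1 - ‖φ z‖ ^ 2)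

/-! Test the isometry on the analytic function `f = φ_a`. Equality in the Schwarz–Pick lemma
makes its Bloch quantity `1 - |φ_a(w)|²`, whose supremum over the disk is `1`, attained at `w = a`.
By the chain rule the Bloch quantity of `f ∘ φ` at `z` is `τ_φ(z) (1 - |φ_a(φ(z))|²)`, and since
`φ(0) = 0` the point-evaluation parts of the two norms agree, so the two suprema coincide. -/

theorem mem_unitDisk {z : ℂ} : z ∈ unitDisk ↔ ‖z‖ < 1 := mem_ball_zero_iff

theorem one_sub_norm_sq_pos {z : ℂ} (hz : ‖z‖ < 1) : 0 < 1 - ‖z‖ ^ 2 := by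
  nlinarith [norm_nonneg z]

/-- The disk automorphism `φ_a`. -/
def mobius (a w : ℂ) : ℂ := (a - w) / (1 - (starRingEnd ℂ) a * w)

section Mobius

variable {a z : ℂ}

theorem one_sub_conj_mul_ne_zero (ha : ‖a‖ < 1) (hz : ‖z‖ < 1) :
    1 - (starRingEnd ℂ) a * z ≠ 0 := by
  refine sub_ne_zero.mpr fun h => ?_
  have : ‖(starRingEnd ℂ) a * z‖ < 1 := by
    rw [norm_mul, Complex.norm_conj]
    nlinarith [norm_nonneg a, norm_nonneg z]
  rw [← h, norm_one] at this
  exact this.false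

theorem hasDerivAt_mobius (ha : ‖a‖ < 1) (hz : ‖z‖ < 1) :
    HasDerivAt (mobius a) ((‖a‖ ^ 2 - 1 : ℝ) / (1 - (starRingEnd ℂ) a * z) ^ 2) z := by
  have hden := one_sub_conj_mul_ne_zero ha hz
  refine (((hasDerivAt_id z).const_sub a).div
    (((hasDerivAt_id z).const_mul ((starRingEnd ℂ) a)).const_sub 1) hden).congr_deriv ?_
  rw [Complex.ofReal_sub, Complex.ofReal_one, Complex.ofReal_pow, ← Complex.mul_conj', id]
  ring

theorem one_sub_norm_mobius_sq (ha : ‖a‖ < 1) (hz : ‖z‖ < 1) :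
    1 - ‖mobius a z‖ ^ 2 =
      (1 - ‖a‖ ^ 2) * (1 - ‖z‖ ^ 2) / ‖1 - (starRingEnd ℂ) a * z‖ ^ 2 := by
  have hden : ‖1 - (starRingEnd ℂ) a * z‖ ^ 2 ≠ 0 :=
    pow_ne_zero 2 (norm_ne_zero_iff.mpr (one_sub_conj_mul_ne_zero ha hz))
  rw [mobius, norm_div, div_pow, eq_div_iff hden, sub_mul, div_mul_cancel₀ _ hden, one_mul]
  simp only [← Complex.normSq_eq_norm_sq, Complex.normSq_apply, Complex.mul_re, Complex.mul_im,
    Complex.sub_re, Complex.sub_im, Complex.conj_re, Complex.conj_im, Complex.one_re,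
    Complex.one_im]
  ring

/-- Equality in the Schwarz–Pick lemma for the automorphism `φ_a`. -/
theorem one_sub_norm_sq_mul_norm_deriv_mobius (ha : ‖a‖ < 1) (hz : ‖z‖ < 1) :
    (1 - ‖z‖ ^ 2) * ‖deriv (mobius a) z‖ = 1 - ‖mobius a z‖ ^ 2 := by
  rw [(hasDerivAt_mobius ha hz).deriv, one_sub_norm_mobius_sq ha hz, norm_div, norm_pow,
    Complex.norm_real, Real.norm_of_nonpos (by nlinarith [norm_nonneg a])]
  ring

theorem mobius_self : mobius a a = 0 := by simp [mobius]

end Mobius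

theorem isGreatest_hbSet_mobius {a : ℂ} (ha : ‖a‖ < 1) :
    IsGreatest (hbSet 1 (mobius a) fun _ => 0) 1 := by
  have hset : hbSet 1 (mobius a) (fun _ => 0) = (fun w => 1 - ‖mobius a w‖ ^ 2) '' unitDisk := by
    refine image_congr fun w hw => ?_
    rw [Real.rpow_one, deriv_const, norm_zero, add_zero,
      one_sub_norm_sq_mul_norm_deriv_mobius ha (mem_unitDisk.mp hw)]
  rw [hset]
  refine ⟨⟨a, mem_unitDisk.mpr ha, by simp [mobius_self]⟩, ?_⟩
  rintro _ ⟨w, -, rfl⟩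
  nlinarith [sq_nonneg ‖mobius a w‖]

theorem hbSet_comp {φ h g : ℂ → ℂ} (hφ : IsSelfMap φ) (hh : DifferentiableOn ℂ h unitDisk)
    (hg : DifferentiableOn ℂ g unitDisk) :
    hbSet 1 (h ∘ φ) (g ∘ φ) = (fun z => tauPhi φ z *
      ((1 - ‖φ z‖ ^ 2) * (‖deriv h (φ z)‖ + ‖deriv g (φ z)‖))) '' unitDisk := by
  refine image_congr fun z hz => ?_
  have hφz : φ z ∈ unitDisk := hφ.2 hz
  have hφ' := hφ.1.differentiableAt (isOpen_ball.mem_nhds hz)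
  rw [Real.rpow_one, deriv_comp z (hh.differentiableAt (isOpen_ball.mem_nhds hφz)) hφ',
    deriv_comp z (hg.differentiableAt (isOpen_ball.mem_nhds hφz)) hφ', norm_mul, norm_mul, tauPhi,
    div_mul_eq_mul_div, mul_div_assoc, mul_div_cancel_left₀ _
      (one_sub_norm_sq_pos (mem_unitDisk.mp hφz)).ne']
  ring

theorem hbSemi_comp_eq_of_isIsometryOn {φ h g : ℂ → ℂ} (hiso : IsIsometryOn 1 φ)
    (h0 : φ 0 = 0) (hf : IsHB 1 h g) : hbSemi 1 (h ∘ φ) (g ∘ φ) = hbSemi 1 h g := by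
  simpa [hbNorm, h0] using hiso h g hf

theorem stmt7_general (φ : ℂ → ℂ) (hφ : IsSelfMap φ) (h0 : φ 0 = 0)
    (hiso : IsIsometryOn 1 φ) :
    ∀ a ∈ unitDisk,
      sSup ((fun z => tauPhi φ z *
        (1 - ‖(a - φ z) / (1 - (starRingEnd ℂ) a * φ z)‖ ^ 2)) '' unitDisk) = 1 := by
  intro a ha
  have ha' := mem_unitDisk.mp ha
  have hmob : DifferentiableOn ℂ (mobius a) unitDisk := fun w hw =>
    (hasDerivAt_mobius ha' (mem_unitDisk.mp hw)).differentiableAt.differentiableWithinAt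
  have hbloch := isGreatest_hbSet_mobius ha'
  have hiso_a := hbSemi_comp_eq_of_isIsometryOn hiso h0 ⟨hmob, differentiableOn_const 0,
    hbloch.bddAbove⟩
  rw [hbSemi, hbSemi, hbloch.csSup_eq, hbSet_comp hφ hmob (differentiableOn_const 0)] at hiso_a
  refine Eq.trans (congrArg sSup (image_congr fun z hz => ?_)) hiso_a
  rw [deriv_const, norm_zero, add_zero,
    one_sub_norm_sq_mul_norm_deriv_mobius ha' (mem_unitDisk.mp (hφ.2 hz))]
  rfl

/-- if `C_φ` is an isometry of `HB(1)`, `φ(0) = 0` and `φ` is not a rotation, then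
for every `a ∈ D`, `sup_{z∈D} τ_φ(z) (1 - |φ_a(φ(z))|²) = 1`, where
`φ_a(w) = (a-w)/(1-āw)`. -/
theorem stmt7 (φ : ℂ → ℂ) (hφ : IsSelfMap φ) (h0 : φ 0 = 0) (hrot : ¬ IsRotation φ)
    (hiso : IsIsometryOn 1 φ) :
    ∀ a ∈ unitDisk,
      sSup ((fun z => tauPhi φ z *
        (1 - ‖(a - φ z) / (1 - (starRingEnd ℂ) a * φ z)‖ ^ 2)) '' unitDisk) = 1 :=
  stmt7_general φ hφ h0 hiso
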